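/- arXiv:1411.7740 — 3 statements merged into one kernel-verified Lean document; each statement's English description precedes it below -/
import Mathlib

section
/- Let Γ be a simple graph on V = {1,…,n} with edge ideal I = I(Γ), let t ≥ 1, and let a ∈ ℕ^n. Then x^a ∈ Ĩ^t \ I^t (where Ĩ^t denotes the saturation of I^t) if and only if: (i) ν(Γ_a) < t, and (ii) ν(Γ_a − N_a(i)) ≥ t − deg_a(i) for all i ∈ V. -/
open MvPolynomial
open scoped Classical

noncomputable section

/-! ### Weighted graphs and matchings -/

/-- Number of times the vertex `v` appears in the multiset of edges `M`. -/
def edgeCount {α : Type*} (M : Multiset (Sym2 α)) (v : α) : ℕ :=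
  Multiset.countP (fun e => v ∈ e) M

/-- A matching of the weighted graph `(G, w)`: a family of edges of `G` (with repetitions
allowed) such that every vertex appears in these edges no more times than its weight.
Vertices of weight `0` are regarded as not belonging to the weighted graph. -/
def IsWMatching {α : Type*} (G : SimpleGraph α) (w : α → ℕ) (M : Multiset (Sym2 α)) : Prop :=
  (∀ e ∈ M, e ∈ G.edgeSet) ∧ ∀ v, edgeCount M v ≤ w v

/-- The matching number of the weighted graph `(G, w)`. -/
def nu {α : Type*} (G : SimpleGraph α) (w : α → ℕ) : ℕ :=
  sSup {m | ∃ M : Multiset (Sym2 α), IsWMatching G w M ∧ Multiset.card M = m}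

/-- `deg_w(i) = Σ_{j ∈ N_w(i)} w j`, the sum of the weights of the neighbours of `i`. -/
def wdeg {α : Type*} [Fintype α] (G : SimpleGraph α) (w : α → ℕ) (i : α) : ℕ :=
  ∑ j : α, if G.Adj i j then w j else 0

/-- The weighted graph obtained from `(G, w)` by deleting the (open) neighbourhood of `i`. -/
def delNbr {α : Type*} (G : SimpleGraph α) (w : α → ℕ) (i : α) : α → ℕ :=
  fun j => if G.Adj i j then 0 else w j

/-- The weighted graph obtained from `(G, w)` by deleting the vertices of `N`. -/
def delSet {α : Type*} (w : α → ℕ) (N : Set α) : α → ℕ :=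
  fun j => if j ∈ N then 0 else w j

/-- A weighted graph `H = (G, w)` is `t`-saturating if `ν(H) < t` and
`ν(H − N_H(i)) ≥ t − deg_H(i)` for every vertex `i` of `H`. -/
def TSaturating {α : Type*} [Fintype α] (G : SimpleGraph α) (w : α → ℕ) (t : ℕ) : Prop :=
  nu G w < t ∧ ∀ i, 0 < w i → t ≤ nu G (delNbr G w i) + wdeg G w i

/-- A weighted graph `H = (G, w)` is strongly `t`-saturating if `ν(H) < t` and
`ν(H − j) ≥ t − w j` for every vertex `j` of `H`. -/
def StronglyTSaturating {α : Type*} (G : SimpleGraph α) (w : α → ℕ) (t : ℕ) : Prop :=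
  nu G w < t ∧ ∀ j, 0 < w j → t ≤ nu G (delSet w {j}) + w j

/-! ### Covers, cores, neighbourhoods -/

/-- A (vertex) cover of a graph. -/
def IsVCover {α : Type*} (G : SimpleGraph α) (F : Set α) : Prop :=
  ∀ ⦃i j⦄, G.Adj i j → i ∈ F ∨ j ∈ F

/-- A minimal (vertex) cover of a graph. -/
def IsMinimalVCover {α : Type*} (G : SimpleGraph α) (F : Set α) : Prop :=
  IsVCover G F ∧ ∀ F', IsVCover G F' → F' ⊆ F → F' = F

/-- `core(F)`: the set of vertices of `F` which are not adjacent to any vertex outside `F`. -/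
def graphCore {α : Type*} (G : SimpleGraph α) (F : Set α) : Set α :=
  {i | i ∈ F ∧ ∀ j, G.Adj i j → j ∈ F}

/-- The closed neighbourhood `N[U]` of a set of vertices `U`. -/
def closedNbhd {α : Type*} (G : SimpleGraph α) (U : Set α) : Set α :=
  U ∪ {v | ∃ u ∈ U, G.Adj u v}

/-- `F` is minimal among the covers of `G` containing `S`. -/
def MinimalCoverOver {α : Type*} (G : SimpleGraph α) (S F : Set α) : Prop :=
  IsVCover G F ∧ S ⊆ F ∧ ∀ F', IsVCover G F' → S ⊆ F' → F' ⊆ F → F' = F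

/-- `W` is a dominating set: every vertex outside `W` is adjacent to a vertex of `W`. -/
def IsDominating {α : Type*} (G : SimpleGraph α) (W : Set α) : Prop :=
  ∀ v, v ∉ W → ∃ u ∈ W, G.Adj u v

/-- Every connected component of `H` contains an odd cycle of length at most `L`. -/
def ComponentOddCycleLe {β : Type*} (H : SimpleGraph β) (L : ℕ) : Prop :=
  ∀ c : H.ConnectedComponent, ∃ (v : β) (cyc : H.Walk v v),
    H.connectedComponentMk v = c ∧ cyc.IsCycle ∧ Odd cyc.length ∧ cyc.length ≤ L

/-- Every connected component of `H` contains an odd cycle. -/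
def ComponentOddCycle {β : Type*} (H : SimpleGraph β) : Prop :=
  ∀ c : H.ConnectedComponent, ∃ (v : β) (cyc : H.Walk v v),
    H.connectedComponentMk v = c ∧ cyc.IsCycle ∧ Odd cyc.length

/-! ### Edge ideals -/

/-- The edge ideal of a simple graph. -/
def edgeIdeal (k : Type*) [CommRing k] {σ : Type*} (G : SimpleGraph σ) :
    Ideal (MvPolynomial σ k) :=
  Ideal.span {p | ∃ i j, G.Adj i j ∧ p = X i * X j}

/-- The maximal homogeneous ideal `(x_1, …, x_n)`. -/
def maxIdeal (k : Type*) [CommRing k] (σ : Type*) : Ideal (MvPolynomial σ k) :=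
  Ideal.span (Set.range (X : σ → MvPolynomial σ k))

/-- `P_F`, the ideal generated by the variables `x_i`, `i ∈ F`. -/
def varIdeal (k : Type*) [CommRing k] {σ : Type*} (F : Set σ) : Ideal (MvPolynomial σ k) :=
  Ideal.span ((fun i => (X i : MvPolynomial σ k)) '' F)

/-- The monomial `x^a`. -/
def monom (k : Type*) [CommRing k] {n : ℕ} (a : Fin n → ℕ) : MvPolynomial (Fin n) k :=
  ∏ i : Fin n, (X i : MvPolynomial (Fin n) k) ^ a i

/-- `f` belongs to the saturation `J̃ = ⋃_{m ≥ 1} (J : 𝔪^m)` of `J`. -/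
def inSaturation (k : Type*) [CommRing k] {σ : Type*} (J : Ideal (MvPolynomial σ k))
    (f : MvPolynomial σ k) : Prop :=
  ∃ m : ℕ, f ∈ Submodule.colon J (((maxIdeal k σ) ^ m : Ideal (MvPolynomial σ k)) : Set (MvPolynomial σ k))

/-- `P` is an associated prime of the ideal `J`, i.e. of the module `R ⧸ J`. -/
def assocPrime {R : Type*} [CommRing R] (J P : Ideal R) : Prop :=
  P ∈ associatedPrimes R (R ⧸ J)

/-- `P` is an embedded associated prime of `J`: an associated prime of `R ⧸ J` which is
not a minimal prime of `J`. -/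
def embeddedAssocPrime {R : Type*} [CommRing R] (J P : Ideal R) : Prop :=
  assocPrime J P ∧ P ∉ J.minimalPrimes

/-- The five configurations appearing in the description of `Ass(I³)`: a triangle; a union
of an edge and a triangle meeting at exactly one vertex; a union of two vertex-disjoint
triangles with no edges between them; a union of two triangles meeting at exactly one
vertex; a pentagon. `W` is the vertex set of the subgraph. -/
def Config3 {α : Type*} (G : SimpleGraph α) (W : Set α) : Prop :=
  (∃ u v w : α, u ≠ v ∧ u ≠ w ∧ v ≠ w ∧ G.Adj u v ∧ G.Adj v w ∧ G.Adj u w ∧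
    W = {u, v, w}) ∨
  (∃ i j h v : α, [i, j, h, v].Pairwise (· ≠ ·) ∧ G.Adj i j ∧ G.Adj j h ∧ G.Adj i h ∧
    G.Adj i v ∧ W = {i, j, h, v}) ∨
  (∃ u₁ v₁ w₁ u₂ v₂ w₂ : α, [u₁, v₁, w₁, u₂, v₂, w₂].Pairwise (· ≠ ·) ∧
    G.Adj u₁ v₁ ∧ G.Adj v₁ w₁ ∧ G.Adj u₁ w₁ ∧ G.Adj u₂ v₂ ∧ G.Adj v₂ w₂ ∧ G.Adj u₂ w₂ ∧
    (∀ x ∈ ({u₁, v₁, w₁} : Set α), ∀ y ∈ ({u₂, v₂, w₂} : Set α), ¬ G.Adj x y) ∧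
    W = {u₁, v₁, w₁, u₂, v₂, w₂}) ∨
  (∃ i j h u v : α, [i, j, h, u, v].Pairwise (· ≠ ·) ∧
    G.Adj i j ∧ G.Adj j h ∧ G.Adj i h ∧ G.Adj i u ∧ G.Adj u v ∧ G.Adj i v ∧
    W = {i, j, h, u, v}) ∨
  (∃ p : Fin 5 → α, Function.Injective p ∧ (∀ i : Fin 5, G.Adj (p i) (p (i + 1))) ∧
    W = Set.range p)

end

/-!
A monomial `x^d` lies in `I^t` exactly when the weighted graph `(Γ, d)` has a matching with `t`
edges, i.e. when `t ≤ ν(Γ_d)`. Multiplying `x^d` by `x_i^m` only raises the weight of `i`. A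
matching of the reweighted graph splits into at most `deg_d(i)` edges meeting `N_d(i)` and a
matching of `Γ_d − N_d(i)`; conversely, once `i` has weight at least `t`, a matching of
`Γ_d − N_d(i)` is completed to `t` edges by a star at `i`. Every monomial of degree `n t + 1` has
an exponent at least `t`, so `x^d` is in the saturation of `I^t` iff
`t ≤ ν(Γ_d − N_d(i)) + deg_d(i)` for all `i`.
-/

section Matchings

variable {α : Type*}

theorem Multiset.exists_le_card_eq {M : Multiset α} {t : ℕ} (h : t ≤ Multiset.card M) :
    ∃ N ≤ M, Multiset.card N = t :=
  ⟨M.toList.take t, by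
    simpa using Multiset.coe_le.2 (M.toList.take_sublist t).subperm, by simpa using h⟩

lemma edgeCount_add (A B : Multiset (Sym2 α)) (v : α) :
    edgeCount (A + B) v = edgeCount A v + edgeCount B v :=
  Multiset.countP_add _ _ _

lemma edgeCount_cons (e : Sym2 α) (M : Multiset (Sym2 α)) (v : α) :
    edgeCount (e ::ₘ M) v = edgeCount M v + if v ∈ e then 1 else 0 :=
  Multiset.countP_cons _ _ _

lemma edgeCount_sum {ι : Type*} (s : Finset ι) (f : ι → Multiset (Sym2 α)) (v : α) :
    edgeCount (∑ j ∈ s, f j) v = ∑ j ∈ s, edgeCount (f j) v :=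
  map_sum (Multiset.countPAddMonoidHom _) f s

lemma edgeCount_replicate (m : ℕ) (e : Sym2 α) (v : α) :
    edgeCount (Multiset.replicate m e) v = if v ∈ e then m else 0 := by
  split_ifs with h
  · exact (Multiset.countP_eq_card.2 fun x hx => Multiset.eq_of_mem_replicate hx ▸ h).trans
      (Multiset.card_replicate _ _)
  · exact Multiset.countP_eq_zero.2 fun x hx => Multiset.eq_of_mem_replicate hx ▸ h

lemma edgeCount_mono {A B : Multiset (Sym2 α)} (h : A ≤ B) (v : α) :
    edgeCount A v ≤ edgeCount B v :=
  Multiset.countP_le_of_le _ h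

lemma edgeCount_le_card (M : Multiset (Sym2 α)) (v : α) : edgeCount M v ≤ Multiset.card M :=
  Multiset.countP_le_card _ _

lemma card_le_sum_edgeCount (F : Finset α) (M : Multiset (Sym2 α))
    (h : ∀ e ∈ M, ∃ v ∈ F, v ∈ e) :
    Multiset.card M ≤ ∑ v ∈ F, edgeCount M v := by
  induction M using Multiset.induction with
  | empty => simp
  | cons e M ih =>
    obtain ⟨v, hvF, hve⟩ := h e (Multiset.mem_cons_self _ _)
    have hv := Finset.single_le_sum (f := fun u => if u ∈ e then 1 else 0)
      (fun _ _ => Nat.zero_le _) hvF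
    have hM := ih fun e' he' => h e' (Multiset.mem_cons_of_mem he')
    simp only [Multiset.card_cons, edgeCount_cons, Finset.sum_add_distrib, if_pos hve] at hv ⊢
    omega

variable {G : SimpleGraph α} {w w' : α → ℕ}

lemma IsWMatching.mono {M N : Multiset (Sym2 α)} (hM : IsWMatching G w M) (h : N ≤ M) :
    IsWMatching G w N :=
  ⟨fun e he => hM.1 e (Multiset.mem_of_le h he), fun v => (edgeCount_mono h v).trans (hM.2 v)⟩

lemma IsWMatching.card_le_sum [Fintype α] {M : Multiset (Sym2 α)} (hM : IsWMatching G w M) :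
    Multiset.card M ≤ ∑ v, w v := by
  refine (card_le_sum_edgeCount Finset.univ M fun e _ => ?_).trans
    (Finset.sum_le_sum fun v _ => hM.2 v)
  induction e using Sym2.ind with
  | _ u _ => exact ⟨u, Finset.mem_univ u, Sym2.mem_mk_left _ _⟩

lemma le_nu_iff [Fintype α] {t : ℕ} :
    t ≤ nu G w ↔ ∃ M, IsWMatching G w M ∧ Multiset.card M = t := by
  have hbdd : BddAbove {m | ∃ M, IsWMatching G w M ∧ Multiset.card M = m} :=
    ⟨∑ v, w v, fun _ ⟨_, hM, hc⟩ => hc ▸ hM.card_le_sum⟩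
  have hne : {m | ∃ M, IsWMatching G w M ∧ Multiset.card M = m}.Nonempty :=
    ⟨0, 0, ⟨by simp, fun v => by simp [edgeCount]⟩, rfl⟩
  constructor
  · intro h
    obtain ⟨M, hM, hc⟩ := Nat.sSup_mem hne hbdd
    obtain ⟨N, hNM, hN⟩ := Multiset.exists_le_card_eq (hc.symm ▸ h : t ≤ Multiset.card M)
    exact ⟨N, hM.mono hNM, hN⟩
  · rintro ⟨M, hM, rfl⟩
    exact le_csSup hbdd ⟨M, hM, rfl⟩

variable [Fintype α]

/-- The edges meeting `N(i)` number at most `deg_w(i)`; the others avoid `i` as well, so they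
form a matching of `H − N(i)`. -/
theorem nu_le_nu_delNbr_add_wdeg (i : α) (hw : ∀ v, v ≠ i → w' v ≤ w v) :
    nu G w' ≤ nu G (delNbr G w i) + wdeg G w i := by
  obtain ⟨M, hM, hcard⟩ := (le_nu_iff (G := G) (w := w')).1 le_rfl
  set p : Sym2 α → Prop := fun e => ∃ j, G.Adj i j ∧ j ∈ e
  have hp : ∀ e ∈ M, ∀ v ∈ e, G.Adj i v ∨ v = i → p e := by
    rintro e he v hve (hv | rfl)
    · exact ⟨v, hv, hve⟩
    · obtain ⟨j, rfl⟩ := Sym2.mem_iff_exists.1 hve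
      exact ⟨j, G.mem_edgeSet.1 (hM.1 _ he), Sym2.mem_mk_right _ _⟩
  have hnear : Multiset.card (M.filter p) ≤ wdeg G w i := by
    calc Multiset.card (M.filter p)
        ≤ ∑ j ∈ Finset.univ.filter (G.Adj i), edgeCount (M.filter p) j := by
          refine card_le_sum_edgeCount _ _ fun e he => ?_
          obtain ⟨j, hj, hje⟩ := (Multiset.mem_filter.1 he).2
          exact ⟨j, Finset.mem_filter.2 ⟨Finset.mem_univ j, hj⟩, hje⟩
      _ ≤ ∑ j ∈ Finset.univ.filter (G.Adj i), w j := by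
          refine Finset.sum_le_sum fun j hj => ?_
          have hji : j ≠ i := ((Finset.mem_filter.1 hj).2).ne'
          exact (edgeCount_mono (Multiset.filter_le _ _) j).trans ((hM.2 j).trans (hw j hji))
      _ = wdeg G w i := by rw [Finset.sum_filter]; rfl
  have hfar : IsWMatching G (delNbr G w i) (M.filter fun e => ¬ p e) := by
    refine ⟨fun e he => hM.1 e (Multiset.mem_of_mem_filter he), fun v => ?_⟩
    by_cases hv : G.Adj i v ∨ v = i
    · have : edgeCount (M.filter fun e => ¬ p e) v = 0 :=
        Multiset.countP_eq_zero.2 fun e he hve =>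
          (Multiset.mem_filter.1 he).2 (hp e (Multiset.mem_of_mem_filter he) v hve hv)
      omega
    · push Not at hv
      rw [delNbr, if_neg hv.1]
      exact (edgeCount_mono (Multiset.filter_le _ _) v).trans ((hM.2 v).trans (hw v hv.2))
  have hsplit := congrArg Multiset.card (Multiset.filter_add_not p M)
  rw [Multiset.card_add] at hsplit
  have := le_nu_iff.2 ⟨_, hfar, rfl⟩
  omega

noncomputable def nbrStar (G : SimpleGraph α) (w : α → ℕ) (i : α) : Multiset (Sym2 α) :=
  ∑ j, Multiset.replicate (if G.Adj i j then w j else 0) s(i, j)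

lemma card_nbrStar (i : α) : Multiset.card (nbrStar G w i) = wdeg G w i := by
  simp [nbrStar, Multiset.card_sum, wdeg]

lemma mem_nbrStar {i : α} {e : Sym2 α} (he : e ∈ nbrStar G w i) :
    ∃ j, G.Adj i j ∧ e = s(i, j) := by
  obtain ⟨j, -, hj⟩ := Multiset.mem_sum.1 he
  obtain ⟨hne, rfl⟩ := Multiset.mem_replicate.1 hj
  exact ⟨j, by_contra fun h => hne (if_neg h), rfl⟩

lemma edgeCount_nbrStar_of_ne {i v : α} (hv : v ≠ i) :
    edgeCount (nbrStar G w i) v = if G.Adj i v then w v else 0 := by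
  have hmem : ∀ j, v ∈ s(i, j) ↔ j = v := fun j => by simp [hv, eq_comm]
  simp [nbrStar, edgeCount_sum, edgeCount_replicate, hmem]

/-- A matching of `H − N(i)` is completed to `t` edges by part of the star at `i`. -/
theorem le_nu_of_le_nu_delNbr_add_wdeg {i : α} {t : ℕ}
    (h : t ≤ nu G (delNbr G w i) + wdeg G w i) (hw : ∀ v, w v ≤ w' v) (hi : t ≤ w' i) :
    t ≤ nu G w' := by
  obtain ⟨M₂, hM₂, hcard₂⟩ := le_nu_iff.1 (min_le_right t (nu G (delNbr G w i)))
  obtain ⟨M₁, hM₁, hcard₁⟩ := Multiset.exists_le_card_eq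
    (M := nbrStar G w i) (t := t - min t (nu G (delNbr G w i))) (by rw [card_nbrStar]; omega)
  refine le_nu_iff.2 ⟨M₁ + M₂, ⟨fun e he => ?_, fun v => ?_⟩, by simp; omega⟩
  · rcases Multiset.mem_add.1 he with he | he
    · obtain ⟨j, hj, rfl⟩ := mem_nbrStar (Multiset.mem_of_le hM₁ he)
      exact G.mem_edgeSet.2 hj
    · exact hM₂.1 e he
  · rw [edgeCount_add]
    rcases eq_or_ne v i with rfl | hv
    · have := edgeCount_le_card M₁ v
      have := edgeCount_le_card M₂ v
      omega
    · have h₁ := (edgeCount_mono hM₁ v).trans_eq (edgeCount_nbrStar_of_ne hv)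
      have h₂ := hM₂.2 v
      have := hw v
      unfold delNbr at h₂
      split_ifs at h₁ h₂ <;> omega

end Matchings

section EdgeIdeal

open Finsupp

variable {σ R : Type*} [CommRing R]

noncomputable def edgeExponent : Sym2 σ → σ →₀ ℕ :=
  Sym2.lift ⟨fun u v => single u 1 + single v 1, fun _ _ => add_comm _ _⟩

lemma sum_map_edgeExponent_apply {G : SimpleGraph σ} {M : Multiset (Sym2 σ)}
    (hM : ∀ e ∈ M, e ∈ G.edgeSet) (v : σ) :
    (M.map edgeExponent).sum v = edgeCount M v := by
  induction M using Multiset.induction with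
  | empty => simp [edgeCount]
  | cons e M ih =>
    rw [Multiset.map_cons, Multiset.sum_cons, Finsupp.add_apply,
      ih fun e' he' => hM e' (Multiset.mem_cons_of_mem he'), edgeCount_cons, add_comm]
    have he := hM e (Multiset.mem_cons_self _ _)
    induction e using Sym2.ind with
    | _ x y =>
      have hxy : x ≠ y := G.mem_edgeSet.1 he |>.ne
      simp only [edgeExponent, Sym2.lift_mk, Finsupp.add_apply, single_apply, Sym2.mem_iff]
      split_ifs <;> grind

lemma edgeIdeal_eq_span_monomial (G : SimpleGraph σ) :
    edgeIdeal R G = Ideal.span ((monomial · (1 : R)) '' (edgeExponent '' G.edgeSet)) := by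
  rw [edgeIdeal, Set.image_image]
  congr 1
  ext p
  constructor
  · rintro ⟨i, j, hij, rfl⟩
    exact ⟨s(i, j), hij, by rw [X, X, monomial_mul, one_mul]; rfl⟩
  · rintro ⟨e, he, rfl⟩
    induction e using Sym2.ind with
    | _ i j => exact ⟨i, j, he, by rw [X, X, monomial_mul, one_mul]; rfl⟩

theorem span_monomial_image_pow {ι : Type*} (f : ι → σ →₀ ℕ) (E : Set ι) (t : ℕ) :
    Ideal.span ((monomial · (1 : R)) '' (f '' E)) ^ t =
      Ideal.span ((monomial · (1 : R)) ''
        {s | ∃ M : Multiset ι, (∀ e ∈ M, e ∈ E) ∧ Multiset.card M = t ∧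
          (M.map f).sum = s}) := by
  induction t with
  | zero => simp
  | succ t ih =>
    rw [pow_succ', ih, Ideal.span_mul_span']
    congr 1
    ext p
    constructor
    · rintro ⟨_, ⟨_, ⟨e, he, rfl⟩, rfl⟩, _, ⟨_, ⟨M, hM, hcard, rfl⟩, rfl⟩, rfl⟩
      refine ⟨_, ⟨e ::ₘ M, ?_, by simp [hcard], rfl⟩, by simp [monomial_mul]⟩
      simpa [Multiset.forall_mem_cons] using ⟨he, hM⟩
    · rintro ⟨_, ⟨M, hM, hcard, rfl⟩, rfl⟩
      rcases M.empty_or_exists_mem with rfl | ⟨e, he⟩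
      · simp at hcard
      obtain ⟨M, rfl⟩ := Multiset.exists_cons_of_mem he
      rw [Multiset.forall_mem_cons] at hM
      rw [Multiset.card_cons] at hcard
      exact ⟨_, ⟨_, ⟨e, hM.1, rfl⟩, rfl⟩, _, ⟨_, ⟨M, hM.2, by omega, rfl⟩, rfl⟩,
        by simp [monomial_mul]⟩

theorem monomial_mem_edgeIdeal_pow_iff [Fintype σ] [Nontrivial R] (G : SimpleGraph σ)
    (d : σ →₀ ℕ) (t : ℕ) :
    monomial d (1 : R) ∈ edgeIdeal R G ^ t ↔ t ≤ nu G d := by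
  rw [edgeIdeal_eq_span_monomial, span_monomial_image_pow, mem_ideal_span_monomial_image,
    support_monomial, if_neg one_ne_zero, le_nu_iff]
  simp only [Finset.mem_singleton, forall_eq]
  constructor
  · rintro ⟨_, ⟨M, hM, hcard, rfl⟩, hle⟩
    refine ⟨M, ⟨hM, fun v => ?_⟩, hcard⟩
    rw [← sum_map_edgeExponent_apply hM]
    exact hle v
  · rintro ⟨M, ⟨hM, hcount⟩, hcard⟩
    refine ⟨_, ⟨M, hM, hcard, rfl⟩, fun v => ?_⟩
    rw [sum_map_edgeExponent_apply hM]
    exact hcount v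

theorem Finsupp.exists_le_apply_of_card_mul_lt_degree [Fintype σ] {e : σ →₀ ℕ} {t : ℕ}
    (h : Fintype.card σ * t < e.degree) : ∃ i, t ≤ e i := by
  by_contra! hlt
  have := Finset.sum_le_sum fun i (_ : i ∈ Finset.univ) => (hlt i).le
  rw [← degree_eq_sum] at this
  simp at this
  omega

theorem inSaturation_edgeIdeal_pow_monomial_iff [Fintype σ] [Nontrivial R]
    (G : SimpleGraph σ) (d : σ →₀ ℕ) (t : ℕ) :
    inSaturation R (edgeIdeal R G ^ t) (monomial d 1) ↔
      ∀ i, t ≤ nu G (delNbr G d i) + wdeg G d i := by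
  have hcolon : ∀ m, monomial d 1 ∈
      (edgeIdeal R G ^ t).colon ((maxIdeal R σ ^ m : Ideal _) : Set _) ↔
        ∀ e : σ →₀ ℕ, e.degree = m → t ≤ nu G ⇑(d + e) := fun m => by
    rw [maxIdeal, ← idealOfVars, pow_idealOfVars_eq_span, Ideal.colon_span, Submodule.mem_colon]
    simp [monomial_mul, monomial_mem_edgeIdeal_pow_iff]
  constructor
  · rintro ⟨m, hm⟩ i
    refine ((hcolon m).1 hm (single i m) (by simp)).trans
      (nu_le_nu_delNbr_add_wdeg i fun v hv => ?_)
    simp [single_eq_of_ne hv]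
  · intro h
    refine ⟨Fintype.card σ * t + 1, (hcolon _).2 fun e he => ?_⟩
    obtain ⟨i, hi⟩ := exists_le_apply_of_card_mul_lt_degree (e := e) (t := t) (by omega)
    exact le_nu_of_le_nu_delNbr_add_wdeg (h i) (fun v => by simp) (by simpa using le_add_left hi)

lemma monom_eq_monomial {n : ℕ} (a : Fin n → ℕ) :
    monom R a = monomial (equivFunOnFinite.symm a) 1 := by
  rw [monomial_eq, C_1, one_mul, prod_fintype _ _ fun i => pow_zero _]
  rfl

end EdgeIdeal

theorem stmt1_general {n : ℕ} (k : Type*) [Field k] (G : SimpleGraph (Fin n))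
    (a : Fin n → ℕ) (t : ℕ) :
    (inSaturation k ((edgeIdeal k G) ^ t) (monom k a) ∧
        monom k a ∉ (edgeIdeal k G) ^ t) ↔
      (nu G a < t ∧ ∀ i : Fin n, t ≤ nu G (delNbr G a i) + wdeg G a i) := by
  rw [monom_eq_monomial, inSaturation_edgeIdeal_pow_monomial_iff,
    monomial_mem_edgeIdeal_pow_iff, Finsupp.coe_equivFunOnFinite_symm, not_le, and_comm]

theorem stmt1 {n : ℕ} (k : Type*) [Field k] (G : SimpleGraph (Fin n))
    (a : Fin n → ℕ) (t : ℕ) (ht : 1 ≤ t) :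
    (inSaturation k ((edgeIdeal k G) ^ t) (monom k a) ∧
        monom k a ∉ (edgeIdeal k G) ^ t) ↔
      (nu G a < t ∧ ∀ i : Fin n, t ≤ nu G (delNbr G a i) + wdeg G a i) :=
  stmt1_general k G a t
end

section
/- Let Γ be a simple graph on V = {1,…,n} with edge ideal I = I(Γ), let t ≥ 1, and let a ∈ ℕ^n. If x^a ∈ Ĩ^t \ I^t, then V_a is a dominating set of Γ, i.e. every vertex of V \ V_a is adjacent to at least one vertex of V_a. -/
/-!
If `v ∉ V_a` had no neighbour in `V_a`, substitute `x_v ↦ 1` and `x_u ↦ 0` for the neighbours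
`u` of `v`. Every edge monomial goes to `0` or to itself, so this endomorphism maps `I^t` into
`I^t`, and it sends `x^a x_v^m` to `x^a`. Since `x^a x_v^m ∈ I^t` for large `m`, we would get
`x^a ∈ I^t`.
-/


open MvPolynomial
open scoped Classical

section NbhdSubst

variable {σ R : Type*} [CommRing R]

theorem X_pow_mem_maxIdeal_pow (v : σ) (m : ℕ) :
    (X v : MvPolynomial σ R) ^ m ∈ (maxIdeal R σ) ^ m :=
  Ideal.pow_mem_pow (Ideal.subset_span (Set.mem_range_self v)) m

noncomputable def nbhdSubst (G : SimpleGraph σ) (v : σ) :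
    MvPolynomial σ R →ₐ[R] MvPolynomial σ R :=
  aeval fun i => if i = v then 1 else if G.Adj v i then 0 else X i

theorem nbhdSubst_X_of_adj {G : SimpleGraph σ} {v i : σ} (h : G.Adj v i) :
    nbhdSubst (R := R) G v (X i) = 0 := by
  simp [nbhdSubst, h, h.ne']

theorem nbhdSubst_X_of_ne_of_not_adj {G : SimpleGraph σ} {v i : σ} (hv : i ≠ v)
    (hadj : ¬ G.Adj v i) : nbhdSubst (R := R) G v (X i) = X i := by
  simp [nbhdSubst, hv, hadj]

theorem map_edgeIdeal_nbhdSubst_le (G : SimpleGraph σ) (v : σ) :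
    (edgeIdeal R G).map (nbhdSubst G v) ≤ edgeIdeal R G := by
  rw [edgeIdeal, Ideal.map_span, Ideal.span_le]
  rintro _ ⟨_, ⟨i, j, hij, rfl⟩, rfl⟩
  rw [SetLike.mem_coe, map_mul]
  by_cases hi : i = v
  · subst hi
    simp [nbhdSubst_X_of_adj hij]
  by_cases hj : j = v
  · subst hj
    simp [nbhdSubst_X_of_adj hij.symm]
  by_cases hvi : G.Adj v i
  · simp [nbhdSubst_X_of_adj hvi]
  by_cases hvj : G.Adj v j
  · simp [nbhdSubst_X_of_adj hvj]
  rw [nbhdSubst_X_of_ne_of_not_adj hi hvi, nbhdSubst_X_of_ne_of_not_adj hj hvj]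
  exact Ideal.subset_span ⟨i, j, hij, rfl⟩

theorem map_edgeIdeal_pow_nbhdSubst_le (G : SimpleGraph σ) (v : σ) (t : ℕ) :
    ((edgeIdeal R G) ^ t).map (nbhdSubst G v) ≤ (edgeIdeal R G) ^ t := by
  rw [Ideal.map_pow]
  exact Ideal.pow_right_mono (map_edgeIdeal_nbhdSubst_le G v) t

end NbhdSubst

theorem nbhdSubst_monom_mul_X_pow {n : ℕ} {R : Type*} [CommRing R] {G : SimpleGraph (Fin n)}
    {v : Fin n} {a : Fin n → ℕ} (hv : a v = 0) (hnbr : ∀ u, G.Adj v u → a u = 0) (m : ℕ) :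
    nbhdSubst G v (monom R a * X v ^ m) = monom R a := by
  rw [map_mul, map_pow, monom, map_prod, nbhdSubst, aeval_X, if_pos rfl, one_pow, mul_one]
  refine Finset.prod_congr rfl fun i _ => ?_
  by_cases hi : a i = 0
  · simp [hi]
  · rw [map_pow, aeval_X, if_neg (fun h : i = v => hi (h ▸ hv)),
      if_neg (fun h => hi (hnbr i h))]

theorem stmt2_general {n : ℕ} (k : Type*) [Field k] (G : SimpleGraph (Fin n))
    (a : Fin n → ℕ) (t : ℕ)
    (h : inSaturation k ((edgeIdeal k G) ^ t) (monom k a) ∧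
      monom k a ∉ (edgeIdeal k G) ^ t) :
    IsDominating G {i | 0 < a i} := by
  obtain ⟨⟨m, hm⟩, hnot⟩ := h
  intro v hv
  by_contra! hno
  have hmul : monom k a * X v ^ m ∈ (edgeIdeal k G) ^ t :=
    Submodule.mem_colon.mp hm _ (X_pow_mem_maxIdeal_pow v m)
  have hnbr : ∀ u, G.Adj v u → a u = 0 := fun u huv =>
    Nat.eq_zero_of_not_pos fun hu => hno u hu huv.symm
  apply hnot
  rw [← nbhdSubst_monom_mul_X_pow (Nat.eq_zero_of_not_pos hv) hnbr m]
  exact map_edgeIdeal_pow_nbhdSubst_le G v t (Ideal.mem_map_of_mem _ hmul)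

theorem stmt2 {n : ℕ} (k : Type*) [Field k] (G : SimpleGraph (Fin n))
    (a : Fin n → ℕ) (t : ℕ) (ht : 1 ≤ t)
    (h : inSaturation k ((edgeIdeal k G) ^ t) (monom k a) ∧
      monom k a ∉ (edgeIdeal k G) ^ t) :
    IsDominating G {i | 0 < a i} :=
  stmt2_general k G a t h
end

section
/- Let Γ be a simple graph on V = {1,…,n} with edge ideal I, and let F be a cover of Γ. Then P_F is an associated prime of I^2 if and only if F is a minimal cover of Γ, or F is minimal among the covers of Γ containing the closed neighborhood N[W] of the vertex set W of a triangle of Γ. -/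
open MvPolynomial
open scoped Classical

/-!
`P_F` is associated to `I²` iff `(I² : f) = P_F` for some `f`, and since both ideals are monomial,
`f` may be taken to be a monomial `x^a`. The condition becomes combinatorial: for each `i ∈ F`
some product of two edges divides `x_i x^a`, while every product of two edges exceeds `a` at
some vertex of `F`. Such an `a` is at most `1` on `F`, and two edges whose vertices in `F` all
carry exponent `1` must meet in `F`. Every vertex of `core(F)` is then adjacent to a triangle of
such vertices; all these triangles coincide, their closed neighbourhood lies in `F` and contains
`core(F)`. Conversely, exponent `1` on the triangle (or on one vertex of `F` when the core is
empty), `0` elsewhere on `F` and `2` off `F` is such an `a`. Finally, `F` is minimal among the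
covers containing `S` iff `S ⊆ F` and `core(F) ⊆ S`.
-/

section Covers

variable {α : Type*} {G : SimpleGraph α} {F F' S : Set α}

theorem IsVCover.diff_singleton (hF : IsVCover G F) {x : α} (hx : x ∈ graphCore G F) :
    IsVCover G (F \ {x}) := by
  intro i j hij
  have := hx.2 i
  have := hx.2 j
  grind [hF hij, G.ne_of_adj hij, hij.symm]

theorem mem_graphCore_of_subset (hF' : IsVCover G F') (hsub : F' ⊆ F) {i : α} (hi : i ∈ F)
    (hi' : i ∉ F') : i ∈ graphCore G F :=
  ⟨hi, fun _ hij => (hF' hij).resolve_left hi' |> (hsub ·)⟩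

theorem minimalCoverOver_iff (hF : IsVCover G F) :
    MinimalCoverOver G S F ↔ S ⊆ F ∧ graphCore G F ⊆ S := by
  refine ⟨fun ⟨_, hSF, hmin⟩ => ⟨hSF, fun x hx => ?_⟩, fun ⟨hSF, hcore⟩ => ⟨hF, hSF, ?_⟩⟩
  · by_contra hxS
    have := hmin (F \ {x}) (hF.diff_singleton hx) (fun y hy => ⟨hSF hy, by grind⟩)
      Set.sdiff_subset
    have hxF := hx.1
    rw [← this] at hxF
    exact hxF.2 rfl
  · intro F' hF' hSF' hsub
    refine hsub.antisymm fun i hi => ?_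
    by_contra hi'
    exact hi' (hSF' (hcore (mem_graphCore_of_subset hF' hsub hi hi')))

theorem isMinimalVCover_iff (hF : IsVCover G F) : IsMinimalVCover G F ↔ graphCore G F = ∅ := by
  simpa [MinimalCoverOver, IsMinimalVCover, hF] using minimalCoverOver_iff (S := ∅) hF

end Covers

section EdgeIdeal

variable {σ k : Type*} [CommRing k] {G : SimpleGraph σ} {F : Set σ}

def edgePairExps (G : SimpleGraph σ) : Set (σ →₀ ℕ) :=
  {e | ∃ p q r s, G.Adj p q ∧ G.Adj r s ∧
    e = Finsupp.single p 1 + Finsupp.single q 1 + Finsupp.single r 1 + Finsupp.single s 1}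

theorem X_mul_X_eq_monomial (i j : σ) :
    (X i * X j : MvPolynomial σ k) = monomial (Finsupp.single i 1 + Finsupp.single j 1) 1 := by
  rw [X, X, monomial_mul, one_mul]

theorem edgeIdeal_sq_eq_span :
    edgeIdeal k G ^ 2 = Ideal.span ((fun e => monomial e (1 : k)) '' edgePairExps G) := by
  rw [edgeIdeal, pow_two, Ideal.span_mul_span']
  congr 1
  ext f
  simp only [Set.mem_mul, Set.mem_ofPred_eq, Set.mem_image, edgePairExps]
  constructor
  · rintro ⟨_, ⟨p, q, hpq, rfl⟩, _, ⟨r, s, hrs, rfl⟩, rfl⟩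
    refine ⟨_, ⟨p, q, r, s, hpq, hrs, rfl⟩, ?_⟩
    simp only [X_mul_X_eq_monomial, monomial_mul, one_mul, add_assoc]
  · rintro ⟨_, ⟨p, q, r, s, hpq, hrs, rfl⟩, rfl⟩
    refine ⟨_, ⟨p, q, hpq, rfl⟩, _, ⟨r, s, hrs, rfl⟩, ?_⟩
    simp only [X_mul_X_eq_monomial, monomial_mul, one_mul, add_assoc]

theorem mem_edgeIdeal_sq_iff {f : MvPolynomial σ k} :
    f ∈ edgeIdeal k G ^ 2 ↔ ∀ m ∈ f.support, ∃ e ∈ edgePairExps G, e ≤ m := by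
  rw [edgeIdeal_sq_eq_span, mem_ideal_span_monomial_image]

theorem mem_varIdeal_iff {f : MvPolynomial σ k} :
    f ∈ varIdeal k F ↔ ∀ m ∈ f.support, ∃ i ∈ F, m i ≠ 0 :=
  mem_ideal_span_X_image

theorem support_mul_monomial_one (f : MvPolynomial σ k) (a : σ →₀ ℕ) :
    (f * monomial a 1).support = f.support.map (addRightEmbedding a) :=
  AddMonoidAlgebra.support_coeff_mul_single f 1 (by simp) a

theorem varIdeal_eq_ker (F : Set σ) :
    varIdeal k F = RingHom.ker
      (aeval fun i => if i ∈ F then 0 else X i : MvPolynomial σ k →ₐ[k] MvPolynomial σ k) := by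
  refine le_antisymm ?_ fun f hf => ?_
  · rw [varIdeal, Ideal.span_le]
    rintro _ ⟨i, hi, rfl⟩
    simp [hi]
  · have hmk : (Ideal.Quotient.mkₐ k (varIdeal k F)).comp
        (aeval fun i => if i ∈ F then 0 else X i) = Ideal.Quotient.mkₐ k (varIdeal k F) := by
      refine algHom_ext fun i => ?_
      by_cases hi : i ∈ F
      · have hXi : (X i : MvPolynomial σ k) ∈ varIdeal k F := Ideal.subset_span ⟨i, hi, rfl⟩
        simpa [hi, eq_comm (a := (0 : _ ⧸ _)), Ideal.Quotient.eq_zero_iff_mem] using hXi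
      · simp [hi]
    rw [← Ideal.Quotient.eq_zero_iff_mem, ← Ideal.Quotient.mkₐ_eq_mk k, ← hmk, AlgHom.comp_apply,
      RingHom.mem_ker.1 hf, map_zero]

theorem varIdeal_isPrime [IsDomain k] (F : Set σ) : (varIdeal k F).IsPrime :=
  varIdeal_eq_ker (k := k) F ▸ RingHom.ker_isPrime _

end EdgeIdeal

theorem assocPrime_iff_exists_colon {R : Type*} [CommRing R] [IsNoetherianRing R]
    {J P : Ideal R} : assocPrime J P ↔ P.IsPrime ∧ ∃ f : R, ∀ r, r ∈ P ↔ r * f ∈ J := by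
  rw [assocPrime, AssociatedPrimes.mem_iff, isAssociatedPrime_iff]
  refine and_congr_right fun _ => Ideal.Quotient.mk_surjective.exists.trans
    (exists_congr fun f => SetLike.ext_iff.trans (forall_congr' fun r => ?_))
  rw [Submodule.mem_colon_singleton, Submodule.mem_bot, Algebra.smul_def,
    Ideal.Quotient.algebraMap_eq, ← map_mul, Ideal.Quotient.eq_zero_iff_mem]

section ColonWitness

variable {σ k : Type*} [CommRing k] {G : SimpleGraph σ} {F : Set σ} {a : σ →₀ ℕ}

/-- The exponent-level form of `(I(G)^2 : x^a) = P_F`. -/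
structure IsColonWitness (G : SimpleGraph σ) (F : Set σ) (a : σ →₀ ℕ) : Prop where
  exists_le : ∀ i ∈ F, ∃ e ∈ edgePairExps G, e ≤ a + Finsupp.single i 1
  exists_lt : ∀ e ∈ edgePairExps G, ∃ v ∈ F, a v < e v

theorem IsColonWitness.exists_ne_zero_iff (h : IsColonWitness G F a) (m : σ →₀ ℕ) :
    (∃ i ∈ F, m i ≠ 0) ↔ ∃ e ∈ edgePairExps G, e ≤ m + a := by
  constructor
  · rintro ⟨i, hi, hmi⟩
    obtain ⟨e, he, hle⟩ := h.exists_le i hi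
    refine ⟨e, he, hle.trans ?_⟩
    rw [add_comm m]
    gcongr
    exact Finsupp.single_le_iff.2 (Nat.one_le_iff_ne_zero.2 hmi)
  · rintro ⟨e, he, hle⟩
    obtain ⟨v, hv, hlt⟩ := h.exists_lt e he
    have := hle v
    exact ⟨v, hv, by simp only [Finsupp.coe_add, Pi.add_apply] at this; omega⟩

theorem IsColonWitness.mem_varIdeal_iff (h : IsColonWitness G F a) (f : MvPolynomial σ k) :
    f ∈ varIdeal k F ↔ f * monomial a 1 ∈ edgeIdeal k G ^ 2 := by
  simp only [_root_.mem_varIdeal_iff, mem_edgeIdeal_sq_iff, support_mul_monomial_one,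
    Finset.forall_mem_map, addRightEmbedding_apply, h.exists_ne_zero_iff]

theorem exists_isColonWitness_of_colon [Nontrivial k] {f : MvPolynomial σ k}
    (hf : ∀ r, r ∈ varIdeal k F ↔ r * f ∈ edgeIdeal k G ^ 2) : ∃ a, IsColonWitness G F a := by
  have hle : ∀ m ∈ f.support, ∀ i ∈ F, ∃ e ∈ edgePairExps G, e ≤ m + Finsupp.single i 1 := by
    intro m hm i hi
    have hXf := (hf (X i)).1 (Ideal.subset_span ⟨i, hi, rfl⟩)
    rw [mem_edgeIdeal_sq_iff, support_X_mul] at hXf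
    simpa [add_comm] using hXf _ (Finset.mem_map_of_mem _ hm)
  obtain ⟨m, hm, hlt⟩ : ∃ m ∈ f.support, ∀ e ∈ edgePairExps G, ∃ v ∈ F, m v < e v := by
    by_contra! hcon
    choose! e he heF using hcon
    -- `x^u` multiplies every term of `f` into `I(G)^2` but avoids the variables of `F`
    set u := (∑ m ∈ f.support, e m).filter (· ∉ F)
    have hmem : monomial u 1 * f ∈ edgeIdeal k G ^ 2 := by
      rw [mul_comm, mem_edgeIdeal_sq_iff, support_mul_monomial_one]
      simp only [Finset.forall_mem_map, addRightEmbedding_apply]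
      intro m hm
      refine ⟨e m, he m hm, fun v => ?_⟩
      by_cases hv : v ∈ F
      · simpa using (heF m hm v hv).trans (Nat.le_add_right _ _)
      · have : e m v ≤ u v := by
          rw [Finsupp.filter_apply_pos (p := (· ∉ F)) _ hv, Finsupp.finsetSum_apply]
          exact Finset.single_le_sum (f := fun m => e m v) (fun _ _ => Nat.zero_le _) hm
        simpa using this.trans (Nat.le_add_left _ _)
    obtain ⟨i, hi, hui⟩ := mem_varIdeal_iff.1 ((hf _).2 hmem) u (by simp [support_monomial])
    exact hui (Finsupp.filter_apply_neg _ _ (not_not.2 hi))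
  exact ⟨m, ⟨fun i hi => hle m hm i hi, hlt⟩⟩

theorem exists_colon_iff_exists_isColonWitness [Nontrivial k] :
    (∃ f : MvPolynomial σ k, ∀ r, r ∈ varIdeal k F ↔ r * f ∈ edgeIdeal k G ^ 2) ↔
      ∃ a, IsColonWitness G F a :=
  ⟨fun ⟨_, hf⟩ => exists_isColonWitness_of_colon hf,
    fun ⟨a, ha⟩ => ⟨monomial a 1, ha.mem_varIdeal_iff⟩⟩

end ColonWitness

def IsPositiveTriangle {σ : Type*} (G : SimpleGraph σ) (F : Set σ) (a : σ →₀ ℕ) (x y z : σ) :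
    Prop :=
  G.Adj x y ∧ G.Adj y z ∧ G.Adj x z ∧ ∀ v, v = x ∨ v = y ∨ v = z → v ∈ F ∧ 1 ≤ a v

namespace IsColonWitness

open Finsupp

variable {σ : Type*} {G : SimpleGraph σ} {F : Set σ} {a : σ →₀ ℕ}

theorem exists_edgePair_tight (h : IsColonWitness G F a) {i : σ} (hi : i ∈ F) :
    ∃ p q r s, G.Adj p q ∧ G.Adj r s ∧
      (∀ v, single p 1 v + single q 1 v + single r 1 v + single s 1 v ≤ a v + single i 1 v) ∧
      single p 1 i + single q 1 i + single r 1 i + single s 1 i = a i + 1 := by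
  obtain ⟨_, ⟨p, q, r, s, hpq, hrs, rfl⟩, hle⟩ := h.exists_le i hi
  obtain ⟨v, -, hlt⟩ := h.exists_lt _ ⟨p, q, r, s, hpq, hrs, rfl⟩
  have hle' (v : σ) := hle v
  simp only [Finsupp.coe_add, Pi.add_apply] at hle' hlt
  refine ⟨p, q, r, s, hpq, hrs, hle', ?_⟩
  have := hle' v
  have := hle' i
  simp only [single_apply] at *
  grind

theorem le_one (h : IsColonWitness G F a) {i : σ} (hi : i ∈ F) : a i ≤ 1 := by
  obtain ⟨p, q, r, s, hpq, hrs, -, htight⟩ := h.exists_edgePair_tight hi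
  have := hpq.ne
  have := hrs.ne
  simp only [single_apply] at htight
  grind

theorem exists_adj_adj_le (h : IsColonWitness G F a) {i : σ} (hi : i ∈ F) :
    ∃ j r s, G.Adj i j ∧ G.Adj r s ∧ ∀ v, single j 1 v + single r 1 v + single s 1 v ≤ a v := by
  obtain ⟨p, q, r, s, hpq, hrs, hle, htight⟩ := h.exists_edgePair_tight hi
  simp only [single_apply] at hle htight
  have : i = p ∨ i = q ∨ i = r ∨ i = s := by grind
  rcases this with rfl | rfl | rfl | rfl
  · exact ⟨q, r, s, hpq, hrs, fun v => by have := hle v; simp only [single_apply]; grind⟩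
  · exact ⟨p, r, s, hpq.symm, hrs, fun v => by have := hle v; simp only [single_apply]; grind⟩
  · exact ⟨s, p, q, hrs, hpq, fun v => by have := hle v; simp only [single_apply]; grind⟩
  · exact ⟨r, p, q, hrs.symm, hpq, fun v => by have := hle v; simp only [single_apply]; grind⟩

theorem exists_adj_adj_of_eq_one (h : IsColonWitness G F a) {i : σ} (hi : i ∈ F)
    (hai : a i = 1) :
    ∃ x y, G.Adj i x ∧ G.Adj i y ∧ ∀ v, single x 1 v + single y 1 v ≤ a v := by
  obtain ⟨p, q, r, s, hpq, hrs, hle, htight⟩ := h.exists_edgePair_tight hi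
  have := hpq.ne
  have := hrs.ne
  simp only [single_apply] at hle htight
  have : (i = p ∨ i = q) ∧ (i = r ∨ i = s) := by grind
  obtain ⟨rfl | rfl, rfl | rfl⟩ := this
  · exact ⟨q, s, hpq, hrs, fun v => by have := hle v; simp only [single_apply]; grind⟩
  · exact ⟨q, r, hpq, hrs.symm, fun v => by have := hle v; simp only [single_apply]; grind⟩
  · exact ⟨p, s, hpq.symm, hrs, fun v => by have := hle v; simp only [single_apply]; grind⟩
  · exact ⟨p, r, hpq.symm, hrs.symm, fun v => by have := hle v; simp only [single_apply]; grind⟩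

theorem exists_common_of_adj (h : IsColonWitness G F a) {p q r s : σ} (hpq : G.Adj p q)
    (hrs : G.Adj r s) (ha : ∀ v ∈ F, v = p ∨ v = q ∨ v = r ∨ v = s → 1 ≤ a v) :
    ∃ v ∈ F, (v = p ∨ v = q) ∧ (v = r ∨ v = s) := by
  obtain ⟨v, hv, hlt⟩ := h.exists_lt _ ⟨p, q, r, s, hpq, hrs, rfl⟩
  have := ha v hv
  have := hpq.ne
  have := hrs.ne
  simp only [Finsupp.coe_add, Pi.add_apply, single_apply] at hlt
  exact ⟨v, hv, by grind⟩

theorem adj_of_le (h : IsColonWitness G F a) {j r s : σ} (hj : j ∈ F) (hrs : G.Adj r s)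
    (hle : ∀ v ∈ F, single j 1 v + single r 1 v + single s 1 v ≤ a v) :
    G.Adj j r ∧ G.Adj j s ∧ r ∈ F ∧ s ∈ F := by
  have hle' (v) (hv : v ∈ F) := hle v hv
  simp only [single_apply] at hle'
  have haj : a j = 1 := by have := h.le_one hj; have := hle' j hj; grind
  obtain ⟨x, y, hjx, hjy, hxy⟩ := h.exists_adj_adj_of_eq_one hj haj
  have hxy' (v) := hxy v
  simp only [single_apply] at hxy'
  have hx := h.exists_common_of_adj hrs hjx fun v hv _ => by
    have := hle' v hv; have := hxy' v; grind
  have hy := h.exists_common_of_adj hrs hjy fun v hv _ => by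
    have := hle' v hv; have := hxy' v; grind
  obtain ⟨x', hx'F, hx'rs, hx'jx⟩ := hx
  obtain ⟨y', hy'F, hy'rs, hy'jy⟩ := hy
  have := h.le_one hx'F
  have := h.le_one hy'F
  have := hle' j hj
  have := hxy' x'
  have := hxy' y'
  have := hrs.ne
  grind

theorem exists_isPositiveTriangle (h : IsColonWitness G F a) {i : σ} (hi : i ∈ graphCore G F) :
    ∃ x y z, G.Adj i x ∧ IsPositiveTriangle G F a x y z := by
  obtain ⟨j, r, s, hij, hrs, hle⟩ := h.exists_adj_adj_le hi.1
  have hj := hi.2 j hij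
  obtain ⟨hjr, hjs, hr, hs⟩ := h.adj_of_le hj hrs fun v _ => hle v
  refine ⟨j, r, s, hij, hjr, hrs, hjs, fun v hv => ⟨by grind, ?_⟩⟩
  have := hle v
  simp only [single_apply] at this
  grind

theorem mem_of_adj_of_isPositiveTriangle (h : IsColonWitness G F a) {x y z u w : σ}
    (hT : IsPositiveTriangle G F a x y z) (huw : G.Adj u w)
    (ha : ∀ v ∈ F, v = u ∨ v = w → 1 ≤ a v) : u = x ∨ u = y ∨ u = z := by
  obtain ⟨hxy, hyz, hxz, hpos⟩ := hT
  have h₁ := h.exists_common_of_adj huw hxy fun v hv _ => by grind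
  have h₂ := h.exists_common_of_adj huw hyz fun v hv _ => by grind
  have h₃ := h.exists_common_of_adj huw hxz fun v hv _ => by grind
  have := hxy.ne
  have := hyz.ne
  have := hxz.ne
  grind

theorem closedNbhd_subset_of_isPositiveTriangle (h : IsColonWitness G F a) {x y z : σ}
    (hT : IsPositiveTriangle G F a x y z) : closedNbhd G {x, y, z} ⊆ F := by
  obtain ⟨hxy, hyz, hxz, hpos⟩ := hT
  rintro v (hv | ⟨t, ht, htv⟩)
  · exact (hpos v (by simpa using hv)).1
  by_contra hvF
  simp only [Set.mem_insert_iff, Set.mem_singleton_iff] at ht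
  have h₁ := h.exists_common_of_adj htv hxy fun v hv _ => by grind
  have h₂ := h.exists_common_of_adj htv hyz fun v hv _ => by grind
  have h₃ := h.exists_common_of_adj htv hxz fun v hv _ => by grind
  have := hxy.ne
  have := hyz.ne
  have := hxz.ne
  grind

theorem graphCore_eq_empty_or (h : IsColonWitness G F a) :
    graphCore G F = ∅ ∨ ∃ x y z, G.Adj x y ∧ G.Adj y z ∧ G.Adj x z ∧
      closedNbhd G {x, y, z} ⊆ F ∧ graphCore G F ⊆ closedNbhd G {x, y, z} := by
  rcases (graphCore G F).eq_empty_or_nonempty with hc | ⟨i, hi⟩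
  · exact .inl hc
  obtain ⟨x, y, z, -, hT⟩ := h.exists_isPositiveTriangle hi
  refine .inr ⟨x, y, z, hT.1, hT.2.1, hT.2.2.1, h.closedNbhd_subset_of_isPositiveTriangle hT,
    fun j hj => ?_⟩
  obtain ⟨x', y', z', hjx', hT'⟩ := h.exists_isPositiveTriangle hj
  have hx' := h.mem_of_adj_of_isPositiveTriangle hT hT'.1 fun v _ hv => (hT'.2.2.2 v (by tauto)).2
  exact .inr ⟨x', by simpa using hx', hjx'.symm⟩

end IsColonWitness

section Construction

open Finsupp

variable {σ : Type*} {G : SimpleGraph σ} {F : Set σ} {a : σ →₀ ℕ}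

theorem exists_le_of_notMem_graphCore (hout : ∀ v ∉ F, 2 ≤ a v) {r s : σ} (hrs : G.Adj r s)
    (hr : 1 ≤ a r) (hs : 1 ≤ a s) {i : σ} (hi : i ∈ F) (hic : i ∉ graphCore G F) :
    ∃ e ∈ edgePairExps G, e ≤ a + single i 1 := by
  obtain ⟨j, hij, hj⟩ : ∃ j, G.Adj i j ∧ j ∉ F := by simpa [graphCore, hi] using hic
  refine ⟨_, ⟨i, j, r, s, hij, hrs, rfl⟩, fun v => ?_⟩
  have := hout v
  have := hrs.ne
  have := hij.ne
  simp only [Finsupp.coe_add, Pi.add_apply, single_apply]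
  grind

theorem exists_le_of_triangle {x y z : σ} (hxy : G.Adj x y) (hyz : G.Adj y z) (hxz : G.Adj x z)
    (hx : 1 ≤ a x) (hy : 1 ≤ a y) (hz : 1 ≤ a z) {i : σ} (hi : i = x ∨ G.Adj x i) :
    ∃ e ∈ edgePairExps G, e ≤ a + single i 1 := by
  have := hxy.ne
  have := hyz.ne
  have := hxz.ne
  rcases hi with rfl | hxi
  · refine ⟨_, ⟨i, y, i, z, hxy, hxz, rfl⟩, fun v => ?_⟩
    simp only [Finsupp.coe_add, Pi.add_apply, single_apply]
    grind
  · have := hxi.ne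
    refine ⟨_, ⟨x, i, y, z, hxi, hyz, rfl⟩, fun v => ?_⟩
    simp only [Finsupp.coe_add, Pi.add_apply, single_apply]
    grind

theorem exists_isColonWitness_of_graphCore_eq_empty [Finite σ] (hF : IsVCover G F)
    (hc : graphCore G F = ∅) : ∃ a, IsColonWitness G F a := by
  rcases F.eq_empty_or_nonempty with rfl | ⟨i₀, hi₀⟩
  · exact ⟨0, fun i hi => hi.elim, fun _ ⟨p, q, _, _, hpq, _⟩ => (hF hpq).elim (·.elim) (·.elim)⟩
  have hnc (i : σ) : i ∉ graphCore G F := hc ▸ Set.notMem_empty i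
  obtain ⟨j₀, hij₀, hj₀⟩ : ∃ j, G.Adj i₀ j ∧ j ∉ F := by simpa [graphCore, hi₀] using hnc i₀
  let a : σ →₀ ℕ := equivFunOnFinite.symm fun v => if v ∈ F then (if v = i₀ then 1 else 0) else 2
  have ha (v : σ) : a v = if v ∈ F then (if v = i₀ then 1 else 0) else 2 := rfl
  refine ⟨a, fun i hi => exists_le_of_notMem_graphCore (by simp_all) hij₀ (by simp [ha, hi₀])
    (by simp [ha, hj₀]) hi (hnc i), ?_⟩
  rintro _ ⟨p, q, r, s, hpq, hrs, rfl⟩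
  simp only [Finsupp.coe_add, Pi.add_apply, single_apply, ha]
  obtain ⟨x, hx, hxpq⟩ : ∃ x ∈ F, x = p ∨ x = q :=
    (hF hpq).elim (⟨p, ·, .inl rfl⟩) (⟨q, ·, .inr rfl⟩)
  obtain ⟨y, hy, hyrs⟩ : ∃ y ∈ F, y = r ∨ y = s :=
    (hF hrs).elim (⟨r, ·, .inl rfl⟩) (⟨s, ·, .inr rfl⟩)
  -- two occurrences of `i₀`, or one occurrence of another vertex of `F`
  by_cases hxi : x = i₀
  · by_cases hyi : y = i₀
    · exact ⟨i₀, hi₀, by grind⟩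
    · exact ⟨y, hy, by grind⟩
  · exact ⟨x, hx, by grind⟩

theorem exists_le_of_mem_closedNbhd {x y z : σ} (hxy : G.Adj x y) (hyz : G.Adj y z)
    (hxz : G.Adj x z) (hpos : ∀ t, t = x ∨ t = y ∨ t = z → 1 ≤ a t) {i : σ}
    (hi : i ∈ closedNbhd G {x, y, z}) : ∃ e ∈ edgePairExps G, e ≤ a + single i 1 := by
  obtain ⟨t, ht, hti⟩ : ∃ t, (t = x ∨ t = y ∨ t = z) ∧ (i = t ∨ G.Adj t i) := by
    rcases hi with hi | ⟨t, ht, hti⟩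
    · exact ⟨i, by simpa using hi, .inl rfl⟩
    · exact ⟨t, by simpa using ht, .inr hti⟩
  rcases ht with rfl | rfl | rfl
  · exact exists_le_of_triangle hxy hyz hxz (hpos _ (by simp)) (hpos _ (by simp))
      (hpos _ (by simp)) hti
  · exact exists_le_of_triangle hxy.symm hxz hyz (hpos _ (by simp)) (hpos _ (by simp))
      (hpos _ (by simp)) hti
  · exact exists_le_of_triangle hxz.symm hxy hyz.symm (hpos _ (by simp)) (hpos _ (by simp))
      (hpos _ (by simp)) hti

theorem exists_lt_of_triangle (hF : IsVCover G F) {x y z : σ} (hxy : G.Adj x y)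
    (hyz : G.Adj y z) (hxz : G.Adj x z) (hN : closedNbhd G {x, y, z} ⊆ F)
    (ha : ∀ v ∈ F, a v = if v = x ∨ v = y ∨ v = z then 1 else 0) :
    ∀ e ∈ edgePairExps G, ∃ v ∈ F, a v < e v := by
  have hT (t : σ) (ht : t = x ∨ t = y ∨ t = z) : t ∈ F := hN (.inl (by simpa using ht))
  have hnbr (t v : σ) (ht : t = x ∨ t = y ∨ t = z) (htv : G.Adj t v) : v ∈ F :=
    hN (.inr ⟨t, by simpa using ht, htv⟩)
  rintro _ ⟨p, q, r, s, hpq, hrs, rfl⟩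
  by_contra! hle
  simp only [Finsupp.coe_add, Pi.add_apply, single_apply] at hle
  -- an endpoint in `F` lies in the triangle, so the other one lies in `N[T] ⊆ F`
  have hedge (u w : σ) (huw : G.Adj u w)
      (hle : ∀ v ∈ F, (v = u ∨ v = w) → v = x ∨ v = y ∨ v = z) :
      (u = x ∨ u = y ∨ u = z) ∧ (w = x ∨ w = y ∨ w = z) := by
    rcases hF huw with hu | hw
    · have hu' := hle u hu (.inl rfl)
      exact ⟨hu', hle w (hnbr u w hu' huw) (.inr rfl)⟩
    · have hw' := hle w hw (.inr rfl)
      exact ⟨hle u (hnbr w u hw' huw.symm) (.inl rfl), hw'⟩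
  have hpq' := hedge p q hpq fun v hv _ => by have := hle v hv; have := ha v hv; grind
  have hrs' := hedge r s hrs fun v hv _ => by have := hle v hv; have := ha v hv; grind
  have := hle x (hT x (by simp))
  have := hle y (hT y (by simp))
  have := hle z (hT z (by simp))
  have := ha x (hT x (by simp))
  have := ha y (hT y (by simp))
  have := ha z (hT z (by simp))
  have := hxy.ne
  have := hyz.ne
  have := hxz.ne
  have := hpq.ne
  have := hrs.ne
  grind

theorem exists_isColonWitness_of_triangle [Finite σ] (hF : IsVCover G F) {x y z : σ}
    (hxy : G.Adj x y) (hyz : G.Adj y z) (hxz : G.Adj x z) (hN : closedNbhd G {x, y, z} ⊆ F)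
    (hc : graphCore G F ⊆ closedNbhd G {x, y, z}) : ∃ a, IsColonWitness G F a := by
  let a : σ →₀ ℕ := equivFunOnFinite.symm fun v =>
    if v ∈ F then (if v = x ∨ v = y ∨ v = z then 1 else 0) else 2
  have ha (v : σ) : a v = if v ∈ F then (if v = x ∨ v = y ∨ v = z then 1 else 0) else 2 := rfl
  have hpos (t : σ) (ht : t = x ∨ t = y ∨ t = z) : 1 ≤ a t := by
    simp [ha, hN (.inl (by simpa using ht) : t ∈ closedNbhd G {x, y, z}), ht]
  refine ⟨a, fun i hi => ?_, exists_lt_of_triangle hF hxy hyz hxz hN fun v hv => by simp [ha, hv]⟩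
  by_cases hic : i ∈ closedNbhd G {x, y, z}
  · exact exists_le_of_mem_closedNbhd hxy hyz hxz hpos hic
  · exact exists_le_of_notMem_graphCore (by simp_all) hxy (hpos _ (by simp)) (hpos _ (by simp))
      hi (hic <| hc ·)

theorem exists_isColonWitness_iff [Finite σ] (hF : IsVCover G F) :
    (∃ a, IsColonWitness G F a) ↔
      graphCore G F = ∅ ∨ ∃ x y z, G.Adj x y ∧ G.Adj y z ∧ G.Adj x z ∧
        closedNbhd G {x, y, z} ⊆ F ∧ graphCore G F ⊆ closedNbhd G {x, y, z} := by
  refine ⟨fun ⟨_, h⟩ => h.graphCore_eq_empty_or, ?_⟩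
  rintro (hc | ⟨x, y, z, hxy, hyz, hxz, hN, hc⟩)
  · exact exists_isColonWitness_of_graphCore_eq_empty hF hc
  · exact exists_isColonWitness_of_triangle hF hxy hyz hxz hN hc

end Construction

theorem stmt15 {n : ℕ} (k : Type*) [Field k] (G : SimpleGraph (Fin n))
    (F : Set (Fin n)) (hF : IsVCover G F) :
    assocPrime ((edgeIdeal k G) ^ 2) (varIdeal k F) ↔
      (IsMinimalVCover G F ∨
        ∃ u v w : Fin n, G.Adj u v ∧ G.Adj v w ∧ G.Adj u w ∧
          MinimalCoverOver G (closedNbhd G {u, v, w}) F) := by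
  rw [assocPrime_iff_exists_colon, and_iff_right (varIdeal_isPrime F),
    exists_colon_iff_exists_isColonWitness, exists_isColonWitness_iff hF, isMinimalVCover_iff hF]
  simp only [minimalCoverOver_iff hF]
end
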